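/- Let 𝒞 be a generalized curvature operator on a finite-dimensional real vector space V which is Jacobi–Tsankov, i.e. J_C(x)∘J_C(y) = J_C(y)∘J_C(x) for all x, y ∈ V. Then J_C(x)∘J_C(x) = 0 for every x ∈ V; in particular each J_C(x) is nilpotent, so 𝒞 is Osserman. -/

import Mathlib

noncomputable section

/-- The Jacobi operator `J(x) : y ↦ 𝒜(y,x)x` of a (tri)linear curvature operator `𝒜`. -/
def jacobiOp {V : Type*} [AddCommGroup V] [Module ℝ V]
    (Aop : V →ₗ[ℝ] V →ₗ[ℝ] V →ₗ[ℝ] V) (x : V) : V →ₗ[ℝ] V where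
  toFun y := Aop y x x
  map_add' y z := by simp
  map_smul' c y := by simp

/-- The polarized Jacobi operator `J(x,y) : z ↦ ½(𝒜(z,x)y + 𝒜(z,y)x)`. -/
def jacobiPol {V : Type*} [AddCommGroup V] [Module ℝ V]
    (Aop : V →ₗ[ℝ] V →ₗ[ℝ] V →ₗ[ℝ] V) (x y : V) : V →ₗ[ℝ] V where
  toFun z := (1/2 : ℝ) • (Aop z x y + Aop z y x)
  map_add' a b := by simp [smul_add]; abel
  map_smul' c a := by simp [smul_add, smul_comm c]

/-!
Applying `J(x) J(y) = J(y) J(x)` to `x` and using `J(x) x = 𝒞(x,x)x = 0` gives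
`J(x) (J(y) x) = 0`, i.e. `𝒞(𝒞(x,y)y, x)x = 0` for all `x, y`. Polarizing in `y` at `y + x`
leaves `𝒞(𝒞(x,y)x, x)x = 0`, and since `J(x) y = 𝒞(y,x)x = -𝒞(x,y)x` this says exactly
that `J(x)² = 0`.
-/

section JacobiTsankov

variable {V : Type*} [AddCommGroup V] [Module ℝ V] {C : V →ₗ[ℝ] V →ₗ[ℝ] V →ₗ[ℝ] V}

@[simp]
theorem jacobiOp_apply (x y : V) : jacobiOp C x y = C y x x := rfl

theorem apply_self_eq_zero_of_antisymm (hC : ∀ x y z : V, C x y z = - C y x z) (x z : V) :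
    C x x z = 0 := by
  have h2 : (2 : ℝ) • C x x z = 0 := by
    rw [two_smul]
    nth_rw 1 [hC x x z]
    exact neg_add_cancel _
  exact (smul_eq_zero.mp h2).resolve_left two_ne_zero

theorem apply_apply_self_self_eq_zero (hC : ∀ x y z : V, C x y z = - C y x z)
    (hJT : ∀ x y : V, jacobiOp C x ∘ₗ jacobiOp C y = jacobiOp C y ∘ₗ jacobiOp C x) (x y : V) :
    C (C x y y) x x = 0 := by
  have h := LinearMap.congr_fun (hJT x y) x
  simpa only [LinearMap.comp_apply, jacobiOp_apply, apply_self_eq_zero_of_antisymm hC, map_zero,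
    LinearMap.zero_apply] using h

theorem apply_apply_self_eq_zero (hC : ∀ x y z : V, C x y z = - C y x z)
    (hJT : ∀ x y : V, jacobiOp C x ∘ₗ jacobiOp C y = jacobiOp C y ∘ₗ jacobiOp C x) (x y : V) :
    C (C x y x) x x = 0 := by
  have h := apply_apply_self_self_eq_zero hC hJT x (y + x)
  simpa only [map_add, LinearMap.add_apply, apply_self_eq_zero_of_antisymm hC,
    apply_apply_self_self_eq_zero hC hJT, add_zero, zero_add] using h

theorem jacobiOp_comp_self_eq_zero (hC : ∀ x y z : V, C x y z = - C y x z)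
    (hJT : ∀ x y : V, jacobiOp C x ∘ₗ jacobiOp C y = jacobiOp C y ∘ₗ jacobiOp C x) (x : V) :
    jacobiOp C x ∘ₗ jacobiOp C x = 0 := by
  ext y
  simp only [LinearMap.comp_apply, jacobiOp_apply, LinearMap.zero_apply]
  rw [hC y x x, map_neg, LinearMap.neg_apply, LinearMap.neg_apply,
    apply_apply_self_eq_zero hC hJT, neg_zero]

end JacobiTsankov

theorem generalized_jacobiTsankov_general
    {V : Type*} [AddCommGroup V] [Module ℝ V]
    -- a generalized curvature operator 𝒞
    (C : V →ₗ[ℝ] V →ₗ[ℝ] V →ₗ[ℝ] V)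
    (hC1 : ∀ x y z : V, C x y z = - C y x z)
    -- 𝒞 is Jacobi–Tsankov
    (hJT : ∀ x y : V, jacobiOp C x ∘ₗ jacobiOp C y = jacobiOp C y ∘ₗ jacobiOp C x) :
    ∀ x : V, jacobiOp C x ∘ₗ jacobiOp C x = 0 ∧ IsNilpotent (jacobiOp C x) := by
  intro x
  have hsq := jacobiOp_comp_self_eq_zero hC1 hJT x
  exact ⟨hsq, 2, by rw [pow_two, Module.End.mul_eq_comp, hsq]⟩

/-- If `𝒞` is a generalized curvature operator on `V` (a bilinear map
`V × V → End(V)` with `𝒞(x,y) = -𝒞(y,x)` and the first Bianchi identity) which is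
Jacobi–Tsankov, then `J_C(x) ∘ J_C(x) = 0` for every `x`; in particular each
`J_C(x)` is nilpotent, so `𝒞` is Osserman. -/
theorem generalized_jacobiTsankov
    {V : Type*} [AddCommGroup V] [Module ℝ V] [FiniteDimensional ℝ V]
    -- a generalized curvature operator 𝒞
    (C : V →ₗ[ℝ] V →ₗ[ℝ] V →ₗ[ℝ] V)
    (hC1 : ∀ x y z : V, C x y z = - C y x z)
    (hC2 : ∀ x y z : V, C x y z + C y z x + C z x y = 0)
    -- 𝒞 is Jacobi–Tsankov
    (hJT : ∀ x y : V, jacobiOp C x ∘ₗ jacobiOp C y = jacobiOp C y ∘ₗ jacobiOp C x) :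
    ∀ x : V, jacobiOp C x ∘ₗ jacobiOp C x = 0 ∧ IsNilpotent (jacobiOp C x) :=
  generalized_jacobiTsankov_general C hC1 hJT
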